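/- For every (p,z) ∈ V × W one has the sign-flip energy identity B((p,z), (S_V p, −S_W z)) = ‖p‖_V² + q_c(z). Consequently, if δ ≥ 0, ℓ : V → ℝ is a linear functional with |ℓ(r)| ≤ δ·‖r‖_V for all r ∈ V, and (p,z) ∈ V × W satisfies B((p,z),(r,v)) = ℓ(r) for all (r,v) ∈ V × W, then ‖p‖_V² + q_c(z) ≤ δ·‖p‖_V; in particular ‖p‖_V ≤ δ and q_c(z) ≤ δ²/4. -/

import Mathlib

/-!
Testing `B` against the sign-flipped pair `(S_V p, -S_W z)` makes the two coupling terms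
`b(z, S_V p)` and `b(-S_W z, p)` cancel by the compatibility `b(z, S_V r) = b(S_W z, r)`, leaving
`a(p, S_V p) + c(z, S_W z) = ‖p‖² + q_c(z)`. For a solution of `B(·, (r, v)) = ℓ(r)` this energy
equals `ℓ(S_V p) ≤ δ ‖S_V p‖ ≤ δ ‖p‖`, and the quadratic inequality `x² + q ≤ δ x` gives
`x ≤ δ` and `q ≤ δ x - x² ≤ δ² / 4`.
-/

section HDGForm

variable {R V W : Type*} [CommRing R] [AddCommGroup V] [Module R V] [AddCommGroup W] [Module R W]

def hdgForm (a : V →ₗ[R] V →ₗ[R] R) (b : W →ₗ[R] V →ₗ[R] R) (c : W →ₗ[R] W →ₗ[R] R)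
    (p : V) (z : W) (r : V) (v : W) : R :=
  a p r + b z r + b v p - c z v

theorem hdgForm_signFlip (a : V →ₗ[R] V →ₗ[R] R) (b : W →ₗ[R] V →ₗ[R] R)
    (c : W →ₗ[R] W →ₗ[R] R) {SV : V →ₗ[R] V} {SW : W →ₗ[R] W}
    (hb : ∀ (z : W) (r : V), b z (SV r) = b (SW z) r) (p : V) (z : W) :
    hdgForm a b c p z (SV p) (-(SW z)) = a p (SV p) + c z (SW z) := by
  simp only [hdgForm, hb, map_neg, LinearMap.neg_apply]
  ring

end HDGForm

theorem sq_add_le_mul_of_hdgForm_eq {V W : Type*} [SeminormedAddCommGroup V] [NormedSpace ℝ V]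
    [AddCommGroup W] [Module ℝ W] {a : V →ₗ[ℝ] V →ₗ[ℝ] ℝ} {b : W →ₗ[ℝ] V →ₗ[ℝ] ℝ}
    {c : W →ₗ[ℝ] W →ₗ[ℝ] ℝ} {SV : V →ₗ[ℝ] V} {SW : W →ₗ[ℝ] W} {ℓ : V →ₗ[ℝ] ℝ} {δ : ℝ}
    (ha : ∀ p : V, a p (SV p) = ‖p‖ ^ 2) (hSV : ∀ r : V, ‖SV r‖ ≤ ‖r‖)
    (hb : ∀ (z : W) (r : V), b z (SV r) = b (SW z) r) (hδ : 0 ≤ δ)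
    (hℓ : ∀ r : V, |ℓ r| ≤ δ * ‖r‖) {p : V} {z : W}
    (hB : ∀ (r : V) (v : W), hdgForm a b c p z r v = ℓ r) :
    ‖p‖ ^ 2 + c z (SW z) ≤ δ * ‖p‖ :=
  calc ‖p‖ ^ 2 + c z (SW z) = ℓ (SV p) := by
        rw [← hB, hdgForm_signFlip a b c hb, ha]
    _ ≤ |ℓ (SV p)| := le_abs_self _
    _ ≤ δ * ‖SV p‖ := hℓ _
    _ ≤ δ * ‖p‖ := mul_le_mul_of_nonneg_left (hSV p) hδ

theorem le_of_sq_add_le_mul {x q δ : ℝ} (hq : 0 ≤ q) (hδ : 0 ≤ δ)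
    (h : x ^ 2 + q ≤ δ * x) : x ≤ δ := by
  nlinarith

theorem le_sq_div_four_of_sq_add_le_mul {x q δ : ℝ} (h : x ^ 2 + q ≤ δ * x) : q ≤ δ ^ 2 / 4 := by
  nlinarith [sq_nonneg (x - δ / 2)]

theorem hdg_sign_flip_energy_identity_general
    (V W : Type*) [NormedAddCommGroup V] [InnerProductSpace ℝ V]
    [AddCommGroup W] [Module ℝ W]
    (a : V →ₗ[ℝ] V →ₗ[ℝ] ℝ) (b : W →ₗ[ℝ] V →ₗ[ℝ] ℝ) (c : W →ₗ[ℝ] W →ₗ[ℝ] ℝ)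
    (SV : V →ₗ[ℝ] V) (SW : W →ₗ[ℝ] W)
    (ha1 : ∀ p : V, a p (SV p) = ‖p‖ ^ 2)
    (ha2 : ∀ r : V, ‖SV r‖ ≤ ‖r‖)
    (hc0 : ∀ z : W, 0 ≤ c z (SW z))
    (hb : ∀ (z : W) (r : V), b z (SV r) = b (SW z) r) :
    (∀ (p : V) (z : W),
      a p (SV p) + b z (SV p) + b (-(SW z)) p - c z (-(SW z))
        = ‖p‖ ^ 2 + c z (SW z)) ∧
    (∀ (δ : ℝ), 0 ≤ δ → ∀ ℓ : V →ₗ[ℝ] ℝ, (∀ r : V, |ℓ r| ≤ δ * ‖r‖) →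
      ∀ (p : V) (z : W),
        (∀ (r : V) (v : W), a p r + b z r + b v p - c z v = ℓ r) →
        ‖p‖ ^ 2 + c z (SW z) ≤ δ * ‖p‖ ∧ ‖p‖ ≤ δ ∧ c z (SW z) ≤ δ ^ 2 / 4) := by
  refine ⟨fun p z => by rw [← ha1]; exact hdgForm_signFlip a b c hb p z, ?_⟩
  intro δ hδ ℓ hℓ p z hB
  have energy := sq_add_le_mul_of_hdgForm_eq ha1 ha2 hb hδ hℓ hB
  exact ⟨energy, le_of_sq_add_le_mul (hc0 z) hδ energy,
    le_sq_div_four_of_sq_add_le_mul energy⟩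

/-- sign-flip energy identity and stability, abstract HDG
structure.  For every `(p, z) ∈ V × W`,
`B((p,z), (SV p, -SW z)) = ‖p‖² + q_c(z)`.  Consequently, if `|ℓ(r)| ≤ δ ‖r‖`
and `(p, z)` satisfies `B((p,z),(r,v)) = ℓ(r)` for all `(r, v)`, then
`‖p‖² + q_c(z) ≤ δ ‖p‖`, hence `‖p‖ ≤ δ` and `q_c(z) ≤ δ²/4`. -/
theorem hdg_sign_flip_energy_identity
    (V W : Type*) [NormedAddCommGroup V] [InnerProductSpace ℝ V]
    [AddCommGroup W] [Module ℝ W] (N : Seminorm ℝ W)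
    (a : V →ₗ[ℝ] V →ₗ[ℝ] ℝ) (b : W →ₗ[ℝ] V →ₗ[ℝ] ℝ) (c : W →ₗ[ℝ] W →ₗ[ℝ] ℝ)
    (SV : V →ₗ[ℝ] V) (SW : W →ₗ[ℝ] W)
    (ha1 : ∀ p : V, a p (SV p) = ‖p‖ ^ 2)
    (ha2 : ∀ r : V, ‖SV r‖ ≤ ‖r‖)
    (ha3 : ∀ p r : V, |a p r| ≤ ‖p‖ * ‖r‖)
    (hc0 : ∀ z : W, 0 ≤ c z (SW z))
    (hc1 : ∀ z : W, c (SW z) (SW (SW z)) ≤ c z (SW z))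
    (hcN : ∀ z : W, N (SW z) ≤ N z)
    (hb : ∀ (z : W) (r : V), b z (SV r) = b (SW z) r) :
    (∀ (p : V) (z : W),
      a p (SV p) + b z (SV p) + b (-(SW z)) p - c z (-(SW z))
        = ‖p‖ ^ 2 + c z (SW z)) ∧
    (∀ (δ : ℝ), 0 ≤ δ → ∀ ℓ : V →ₗ[ℝ] ℝ, (∀ r : V, |ℓ r| ≤ δ * ‖r‖) →
      ∀ (p : V) (z : W),
        (∀ (r : V) (v : W), a p r + b z r + b v p - c z v = ℓ r) →
        ‖p‖ ^ 2 + c z (SW z) ≤ δ * ‖p‖ ∧ ‖p‖ ≤ δ ∧ c z (SW z) ≤ δ ^ 2 / 4) :=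
  hdg_sign_flip_energy_identity_general V W a b c SV SW ha1 ha2 hc0 hb
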